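/- Two nonzero quadratic binary forms G and H over a field of characteristic zero are equal up to a nonzero scalar multiple if and only if their first transvectant (G,H)_1 is identically zero. -/

import Mathlib

open MvPolynomial

/-- The `r`-th transvectant of binary forms `G`, `H` of degrees `m`, `n`:
`(G,H)_r = ((m−r)!(n−r)!)/(m!·n!) · Σ_{i=0}^{r} (−1)^i·C(r,i)·
  (∂^r G/∂x1^{r−i}∂x2^{i})·(∂^r H/∂x1^{i}∂x2^{r−i})`. -/
noncomputable def transvectant {k : Type*} [Field k] (m n r : ℕ)
    (G H : MvPolynomial (Fin 2) k) : MvPolynomial (Fin 2) k :=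
  C ((((m - r).factorial * (n - r).factorial : ℕ) : k) /
      ((m.factorial * n.factorial : ℕ) : k)) *
    ∑ i ∈ Finset.range (r + 1),
      C ((-1 : k) ^ i * (r.choose i : k)) *
        ((fun p => pderiv (0 : Fin 2) p)^[r - i]
            ((fun p => pderiv (1 : Fin 2) p)^[i] G) *
          (fun p => pderiv (0 : Fin 2) p)^[i]
            ((fun p => pderiv (1 : Fin 2) p)^[r - i] H))

/-!
A binary quadratic form is determined by its coefficient vector in `k³`, and for two quadratics
the transvectant `(G,H)_1` has, up to the units `1/2, -1, 1/2`, the entries of the cross product of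
the two coefficient vectors as coefficients. Two nonzero vectors of `k³` are proportional exactly
when their cross product vanishes, i.e. when they define the same point of the projective plane.
-/

open Finsupp (single)
open scoped Matrix

section QuadraticForms

variable {R : Type*} [CommRing R]

/-- `quadForm ![a, b, c] = a x₁² + b x₁x₂ + c x₂²`: `b` is the coefficient of `x₁x₂`, not Cayley's
`g₁ = b / 2`. -/
noncomputable def quadForm (v : Fin 3 → R) : MvPolynomial (Fin 2) R :=
  C (v 0) * X 0 ^ 2 + C (v 1) * (X 0 * X 1) + C (v 2) * X 1 ^ 2

noncomputable def quadCoeffs (P : MvPolynomial (Fin 2) R) : Fin 3 → R :=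
  ![coeff (single 0 2) P, coeff (single 0 1 + single 1 1) P, coeff (single 1 2) P]

theorem quadCoeffs_quadForm (v : Fin 3 → R) : quadCoeffs (quadForm v) = v := by
  have hX : (X 0 * X 1 : MvPolynomial (Fin 2) R) = monomial (single 0 1 + single 1 1) 1 := by
    rw [X, X, monomial_mul, one_mul]
  funext i
  fin_cases i <;> simp [quadCoeffs, quadForm, hX, coeff_X_pow, coeff_monomial, Finsupp.ext_iff]

theorem quadForm_injective : Function.Injective (quadForm (R := R)) :=
  Function.LeftInverse.injective quadCoeffs_quadForm

theorem quadForm_eq_zero_iff {v : Fin 3 → R} : quadForm v = 0 ↔ v = 0 :=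
  quadForm_injective.eq_iff' (by simp [quadForm])

theorem quadForm_smul (c : R) (v : Fin 3 → R) : quadForm (c • v) = C c * quadForm v := by
  simp only [quadForm, Pi.smul_apply, smul_eq_mul, map_mul]
  ring

theorem isHomogeneous_quadForm (v : Fin 3 → R) : (quadForm v).IsHomogeneous 2 :=
  (((isHomogeneous_X_pow 0 2).C_mul _).add
      (((isHomogeneous_X R 0).mul (isHomogeneous_X R 1)).C_mul _)).add
    ((isHomogeneous_X_pow 1 2).C_mul _)

theorem eq_of_degree_eq_two {d : Fin 2 →₀ ℕ} (hd : d.degree = 2) :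
    d = single 0 2 ∨ d = single 0 1 + single 1 1 ∨ d = single 1 2 := by
  rw [Finsupp.degree_eq_sum, Fin.sum_univ_two] at hd
  simp only [Finsupp.ext_iff, Fin.forall_fin_two, Finsupp.single_eq_same, ne_eq, one_ne_zero,
    not_false_eq_true, Finsupp.single_eq_of_ne, Finsupp.coe_add, Pi.add_apply, zero_ne_one,
    add_zero, zero_add]
  omega

theorem MvPolynomial.IsHomogeneous.quadForm_quadCoeffs {P : MvPolynomial (Fin 2) R}
    (hP : P.IsHomogeneous 2) : quadForm (quadCoeffs P) = P := by
  ext d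
  by_cases hd : d.degree = 2
  · have := congrFun (quadCoeffs_quadForm (quadCoeffs P))
    rcases eq_of_degree_eq_two hd with rfl | rfl | rfl
    exacts [this 0, this 1, this 2]
  · rw [(isHomogeneous_quadForm _).coeff_eq_zero hd, hP.coeff_eq_zero hd]

theorem jacobian_quadForm (v w : Fin 3 → R) :
    pderiv 0 (quadForm v) * pderiv 1 (quadForm w) - pderiv 1 (quadForm v) * pderiv 0 (quadForm w)
      = quadForm ![2 * (v ⨯₃ w) 2, -(4 * (v ⨯₃ w) 1), 2 * (v ⨯₃ w) 0] := by
  simp [quadForm, cross_apply, pderiv_X, map_ofNat]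
  ring

end QuadraticForms

theorem transvectant_two_two_one {k : Type*} [Field k] (G H : MvPolynomial (Fin 2) k) :
    transvectant 2 2 1 G H =
      C (1 / 4 : k) * (pderiv 0 G * pderiv 1 H - pderiv 1 G * pderiv 0 H) := by
  simp only [transvectant, Finset.sum_range_succ, Finset.sum_range_zero]
  norm_num
  left
  ring

theorem transvectant_quadForm_eq_zero_iff {k : Type*} [Field k] [NeZero (2 : k)]
    (v w : Fin 3 → k) :
    transvectant 2 2 1 (quadForm v) (quadForm w) = 0 ↔ v ⨯₃ w = 0 := by
  have h4 : (4 : k) ≠ 0 := by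
    rw [show (4 : k) = 2 * 2 by norm_num]
    exact mul_ne_zero two_ne_zero two_ne_zero
  rw [transvectant_two_two_one, jacobian_quadForm, mul_eq_zero, C_eq_zero]
  simp only [one_div, inv_eq_zero, h4, false_or, quadForm_eq_zero_iff, cross_apply,
    Matrix.cons_eq_zero_iff, Matrix.zero_empty, and_true, mul_eq_zero, neg_eq_zero, two_ne_zero]
  tauto

/-- Two nonzero quadratic binary forms `G`, `H` over a field of characteristic zero are
equal up to a nonzero scalar multiple if and only if their first transvectant `(G,H)_1`
is identically zero. -/
theorem pascal_stmt_19 {k : Type*} [Field k] [CharZero k]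
    (G H : MvPolynomial (Fin 2) k)
    (hG2 : G.IsHomogeneous 2) (hH2 : H.IsHomogeneous 2)
    (hG : G ≠ 0) (hH : H ≠ 0) :
    (∃ c : k, c ≠ 0 ∧ H = C c * G) ↔ transvectant 2 2 1 G H = 0 := by
  obtain ⟨v, rfl⟩ : ∃ v, quadForm v = G := ⟨_, hG2.quadForm_quadCoeffs⟩
  obtain ⟨w, rfl⟩ : ∃ w, quadForm w = H := ⟨_, hH2.quadForm_quadCoeffs⟩
  have hv : v ≠ 0 := mt quadForm_eq_zero_iff.mpr hG
  have hw : w ≠ 0 := mt quadForm_eq_zero_iff.mpr hH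
  rw [transvectant_quadForm_eq_zero_iff, ← cross_anticomm, neg_eq_zero,
    ← Projectivization.mk_eq_mk_iff_crossProduct_eq_zero hw hv, Projectivization.mk_eq_mk_iff]
  simp only [← quadForm_smul, quadForm_injective.eq_iff]
  constructor
  · rintro ⟨c, hc, rfl⟩
    exact ⟨Units.mk0 c hc, rfl⟩
  · rintro ⟨a, rfl⟩
    exact ⟨a, a.ne_zero, rfl⟩
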